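/- Let ξ > 0, N ≥ 2, 1 ≤ l ≤ 2N−2, and f_{N−1,l} as above. If cosh(lξ/N) ≥ cosh(2ξ) − 1/2, then f_{N−1,l−1} > f_{N−1,l}. -/

import Mathlib

/-
Peeling off the last factor of the product, `f_{d,l+1} = f_{d,l} · 2(cosh((2d+1)ξ/N) − cosh((l+1)ξ/N))`
by the product-to-sum formula for `sinh`. For `d = N − 1` and `l ≤ 2N − 2` every factor of
`f_{N−1,l−1}` is positive, and since `(2N − 1)/N < 2` the new factor is
`< 2(cosh 2ξ − cosh(lξ/N)) ≤ 1` under the hypothesis.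
-/

noncomputable def arcosh (x : ℝ) : ℝ := Real.log (x + Real.sqrt (x^2 - 1))

noncomputable def kappa : ℝ := arcosh (3/2) / 2

noncomputable def f (ξ : ℝ) (b N d l : ℕ) : ℝ :=
  Real.exp ((2*(b:ℝ)+1) * ((d:ℝ)^2 + (d:ℝ)) * ξ / (2*(N:ℝ))) *
    (2 * Real.sinh ((2*(d:ℝ)+1) * ξ / (2*(N:ℝ)))) *
  ∏ k ∈ Finset.Icc 1 l,
    (4 * Real.sinh ((2*(d:ℝ)+1+(k:ℝ)) * ξ / (2*(N:ℝ))) *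
       Real.sinh ((2*(d:ℝ)+1-(k:ℝ)) * ξ / (2*(N:ℝ))))

open Real

lemma Real.four_mul_sinh_mul_sinh (x y : ℝ) :
    4 * sinh x * sinh y = 2 * (cosh (x + y) - cosh (x - y)) := by
  rw [cosh_add, cosh_sub]; ring

lemma f_succ (ξ : ℝ) (b N d l : ℕ) :
    f ξ b N d (l + 1) =
      f ξ b N d l * (2 * (cosh ((2*(d:ℝ)+1) * ξ / N) - cosh (((l:ℝ)+1) * ξ / N))) := by
  have hsum : (2*(d:ℝ)+1+((l+1:ℕ):ℝ)) * ξ / (2*N) + (2*(d:ℝ)+1-((l+1:ℕ):ℝ)) * ξ / (2*N)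
      = (2*(d:ℝ)+1) * ξ / N := by
    rw [← add_div, ← mul_div_mul_left _ (N:ℝ) two_ne_zero]; push_cast; ring_nf
  have hdiff : (2*(d:ℝ)+1+((l+1:ℕ):ℝ)) * ξ / (2*N) - (2*(d:ℝ)+1-((l+1:ℕ):ℝ)) * ξ / (2*N)
      = ((l:ℝ)+1) * ξ / N := by
    rw [← sub_div, ← mul_div_mul_left _ (N:ℝ) two_ne_zero]; push_cast; ring_nf
  rw [f, Finset.prod_Icc_succ_top (by omega), ← mul_assoc, four_mul_sinh_mul_sinh, hsum, hdiff]
  rfl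

lemma f_pos {ξ : ℝ} (hξ : 0 < ξ) (b : ℕ) {N : ℕ} (hN : 0 < N) (d : ℕ) {l : ℕ} (hl : l ≤ 2 * d) :
    0 < f ξ b N d l := by
  have hN' : (0:ℝ) < N := by exact_mod_cast hN
  have sinh_pos_of_coeff_pos {c : ℝ} (hc : 0 < c) : 0 < sinh (c * ξ / (2 * N)) :=
    sinh_pos_iff.mpr (by positivity)
  refine mul_pos (mul_pos (exp_pos _) (mul_pos two_pos (sinh_pos_of_coeff_pos (by positivity))))
    (Finset.prod_pos fun k hk => ?_)
  have hkl : (k:ℝ) ≤ 2 * d := by exact_mod_cast (Finset.mem_Icc.mp hk).2.trans hl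
  exact mul_pos (mul_pos four_pos (sinh_pos_of_coeff_pos (by positivity)))
    (sinh_pos_of_coeff_pos (by linarith))

theorem stmt4_general (ξ : ℝ) (hξ : 0 < ξ) (N b : ℕ) (l : ℕ)
    (hl1 : 1 ≤ l) (hl2 : l ≤ 2*N - 2)
    (h : Real.cosh ((l:ℝ) * ξ / (N:ℝ)) ≥ Real.cosh (2*ξ) - 1/2) :
    f ξ b N (N-1) l < f ξ b N (N-1) (l-1) := by
  obtain ⟨m, rfl⟩ : ∃ m, l = m + 1 := ⟨l - 1, by omega⟩
  have hN1 : (1:ℝ) ≤ N := by exact_mod_cast (by omega : 1 ≤ N)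
  have hN0 : (0:ℝ) < N := by linarith
  have hcast : 2 * ((N - 1 : ℕ) : ℝ) + 1 = 2 * N - 1 := by
    rw [Nat.cast_sub (by omega)]; ring
  have hcosh : cosh ((2 * N - 1) * ξ / N) < cosh (2 * ξ) := by
    rw [cosh_lt_cosh, abs_of_pos (div_pos (mul_pos (by linarith) hξ) hN0),
      abs_of_pos (by positivity), div_lt_iff₀ hN0]
    nlinarith
  rw [Nat.add_sub_cancel, f_succ, hcast]
  push_cast at h
  exact mul_lt_of_lt_one_right (f_pos hξ b (by omega) (N - 1) (by omega)) (by linarith)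

theorem stmt4 (ξ : ℝ) (hξ : 0 < ξ) (N b : ℕ) (hN : 2 ≤ N) (l : ℕ)
    (hl1 : 1 ≤ l) (hl2 : l ≤ 2*N - 2)
    (h : Real.cosh ((l:ℝ) * ξ / (N:ℝ)) ≥ Real.cosh (2*ξ) - 1/2) :
    f ξ b N (N-1) l < f ξ b N (N-1) (l-1) :=
  stmt4_general ξ hξ N b l hl1 hl2 h
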